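/- arXiv:1210.4352 — 2 statements merged into one kernel-verified Lean document; each statement's English description precedes it below -/
import Mathlib

section
/- Any split graph G contains no AP_5 and no double AP_6. -/
/-!
Fix a split partition: a clique `K` with independent complement. Every edge has an end in `K`,
and every non-edge between distinct vertices has an end outside `K`. In an `AP₅`
`v₁v₂v₃v₁v₅v₆` the vertex `v₁` is non-adjacent to both ends of the edge `v₂v₃`, so `v₁ ∉ K`;
then its neighbours `v₅ ≠ v₆` both lie in `K`, contradicting `v₅v₆ ∉ E`. In a double `AP₆`
with chords `v₁v₃, v₂v₆`, both `v₃` and `v₆` are common neighbours of the non-adjacent pair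
`v₁, v₂`, hence lie in `K`; so `v₄, v₅ ∉ K`, contradicting the edge `v₄v₅`.
-/

open SimpleGraph

/-- Two edges `e`, `f` of a simple graph `G` are *in conflict* (written `e ‖ f` in the paper):
their endpoints can be written `e = v₁v₂`, `f = v₃v₄` with `v₁v₄ ∉ E` and `v₂v₃ ∉ E`,
so that the four (distinct) vertices build an alternating cycle `AC₄`
(one of `2K₂`, `P₄`, `C₄`). -/
def Sym2Conflict {V : Type*} (G : SimpleGraph V) (e f : Sym2 V) : Prop :=
  ∃ a b c d : V, e = s(a, b) ∧ f = s(c, d) ∧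
    G.Adj a b ∧ G.Adj c d ∧ ¬ G.Adj a d ∧ ¬ G.Adj b c ∧
    a ≠ c ∧ a ≠ d ∧ b ≠ c ∧ b ≠ d

/-- The conflict graph `G*` of `G` (whose vertices are the edges of `G`, two of them adjacent
iff the corresponding edges are in conflict) is bipartite, i.e. `χ(G*) ≤ 2`:
there is a `2`-coloring of the edges of `G` such that conflicting edges get different colors. -/
def ConflictGraphBipartite {V : Type*} (G : SimpleGraph V) : Prop :=
  ∃ χ : Sym2 V → Bool, ∀ e f, Sym2Conflict G e f → χ e ≠ χ f

/-- `χ` is a proper 2-coloring of the vertices of the conflict graph `G*`. -/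
def ProperConflictColoring {V : Type*} (G : SimpleGraph V) (χ : Sym2 V → Bool) : Prop :=
  ∀ e f, Sym2Conflict G e f → χ e ≠ χ f

/-- `e` and `f` lie in the same connected component of the conflict graph `G*`. -/
def SameComp {V : Type*} (G : SimpleGraph V) (e f : Sym2 V) : Prop :=
  Relation.ReflTransGen (Sym2Conflict G) e f

/-- The literals of `e` and `f` (w.r.t. the proper 2-coloring `χ` of the conflict graph)
are equal: same connected component of `G*` and same color. -/
def SameLit {V : Type*} (G : SimpleGraph V) (χ : Sym2 V → Bool) (e f : Sym2 V) : Prop :=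
  SameComp G e f ∧ χ e = χ f

/-- The literal of `e` is the negation of the literal of `f`: same connected component of the
conflict graph `G*`, different colors. -/
def OppLit {V : Type*} (G : SimpleGraph V) (χ : Sym2 V → Bool) (e f : Sym2 V) : Prop :=
  SameComp G e f ∧ χ e ≠ χ f

/-- Six (not necessarily distinct) vertices `v₁,…,v₆` build an alternating cycle `AC₆` in `G`:
`v₁v₂, v₃v₄, v₅v₆ ∉ E` and `v₂v₃, v₄v₅, v₆v₁ ∈ E`. -/
def IsAC6 {V : Type*} (G : SimpleGraph V) (v1 v2 v3 v4 v5 v6 : V) : Prop :=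
  ¬ G.Adj v1 v2 ∧ ¬ G.Adj v3 v4 ∧ ¬ G.Adj v5 v6 ∧
    G.Adj v2 v3 ∧ G.Adj v4 v5 ∧ G.Adj v6 v1

/-- `G` has an alternating cycle `AC_{2k}` in the edge subset `F`:
`2k` (not necessarily distinct) vertices `w 0, …, w (2k-1)` with
`w i — w (i+1)` an edge of `F` for odd `i` and a non-edge of `G` for even `i`
(indices mod `2k`). -/
def HasAltCycle {V : Type*} (G : SimpleGraph V) (F : Set (Sym2 V)) (k : ℕ) : Prop :=
  ∃ w : ℕ → V, ∀ i < 2 * k,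
    (Odd i → s(w i, w ((i + 1) % (2 * k))) ∈ F) ∧
    (Even i → ¬ G.Adj (w i) (w ((i + 1) % (2 * k))))

/-- `G` is a threshold graph: there are real weights `a` with `uv ∈ E ↔ a u + a v ≥ 1`
for all distinct `u`, `v`. -/
def IsThresholdGraph {V : Type*} (G : SimpleGraph V) : Prop :=
  ∃ a : V → ℝ, ∀ u v : V, u ≠ v → (G.Adj u v ↔ 1 ≤ a u + a v)

/-- The edge set of `G` is the union of the edge sets of `k` threshold graphs on `V`. -/
def HasThresholdCover {V : Type*} (G : SimpleGraph V) (k : ℕ) : Prop :=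
  ∃ f : Fin k → SimpleGraph V, (∀ i, IsThresholdGraph (f i)) ∧
    ∀ u v, G.Adj u v ↔ ∃ i, (f i).Adj u v

/-- The threshold cover number `t(G)`: the smallest (positive) `k` such that the edge set
of `G` is the union of the edge sets of `k` threshold graphs. -/
noncomputable def thresholdCoverNumber {V : Type*} (G : SimpleGraph V) : ℕ :=
  sInf {k | 0 < k ∧ HasThresholdCover G k}

/-- A bipartite graph, given as a relation `E : α → β → Prop` between its two color classes,
is a *chain graph*: the neighborhoods of any two vertices in the same color class are
comparable under inclusion. -/
def IsChainRel {α β : Type*} (E : α → β → Prop) : Prop :=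
  (∀ a a' : α, (∀ b, E a b → E a' b) ∨ (∀ b, E a' b → E a b)) ∧
  (∀ b b' : β, (∀ a, E a b → E a b') ∨ (∀ a, E a b' → E a b))

/-- The edge set of the bipartite graph `E` is the union of the edge sets of `k` chain graphs. -/
def HasChainCover {α β : Type*} (E : α → β → Prop) (k : ℕ) : Prop :=
  ∃ f : Fin k → α → β → Prop, (∀ i, IsChainRel (f i)) ∧
    ∀ a b, E a b ↔ ∃ i, f i a b

/-- The chain cover number `ch(G)` of a bipartite graph. -/
noncomputable def chainCoverNumber {α β : Type*} (E : α → β → Prop) : ℕ :=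
  sInf {k | 0 < k ∧ HasChainCover E k}

/-- `G` is a split graph: its vertex set can be partitioned into a clique and an
independent set. -/
def IsSplitGraph {V : Type*} (G : SimpleGraph V) : Prop :=
  ∃ K : Set V, (∀ u ∈ K, ∀ v ∈ K, u ≠ v → G.Adj u v) ∧
    ∀ u ∉ K, ∀ v ∉ K, ¬ G.Adj u v

/-- `P` is an interval order: each element gets a real interval `[l x, r x]` such that
`P x y` iff the interval of `x` lies entirely to the left of the interval of `y`. -/
def IsIntervalOrder {U : Type*} (P : U → U → Prop) : Prop :=
  ∃ l r : U → ℝ, (∀ x, l x ≤ r x) ∧ ∀ x y, P x y ↔ r x < l y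

/-- `P` is a (strict) partial order: irreflexive and transitive. -/
def IsPartialOrderRel {U : Type*} (P : U → U → Prop) : Prop :=
  (∀ x, ¬ P x x) ∧ ∀ x y z, P x y → P y z → P x z

/-- `P` is a linear order: a partial order in which any two distinct elements are comparable. -/
def IsLinearOrderRel {U : Type*} (P : U → U → Prop) : Prop :=
  IsPartialOrderRel P ∧ ∀ x y : U, x ≠ y → P x y ∨ P y x

/-- A bipartite graph `E` on color classes `U = V = Fin n` (containing the perfect matching
`E₀ = {uᵢvᵢ}`) is *linear-interval coverable*: `E = E₁ ∪ E₂` for chain graphs `E₁`, `E₂`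
with `E₀ ⊆ E₂ \ E₁`. -/
def LinearIntervalCoverable (n : ℕ) (E : Fin n → Fin n → Prop) : Prop :=
  ∃ E1 E2 : Fin n → Fin n → Prop,
    IsChainRel E1 ∧ IsChainRel E2 ∧ (∀ i j, E i j ↔ E1 i j ∨ E2 i j) ∧
    ∀ i, E2 i i ∧ ¬ E1 i i

/-- The associated split graph `H_G` of a bipartite graph `G = (α, β, E)`:
the graph on `α ⊕ β` obtained from `G` by turning the color class `β` into a clique. -/
def assocSplitGraph {α β : Type*} (E : α → β → Prop) : SimpleGraph (α ⊕ β) where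
  Adj x y := match x, y with
    | Sum.inl _, Sum.inl _ => False
    | Sum.inl a, Sum.inr b => E a b
    | Sum.inr b, Sum.inl a => E a b
    | Sum.inr b, Sum.inr b' => b ≠ b'
  symm := by
    constructor
    rintro (a | b) (a' | b') h
    · exact h
    · exact h
    · exact h
    · exact Ne.symm h
  loopless := by
    constructor
    rintro (a | b) h
    · exact h
    · exact h rfl

/-- The split graph `H` of the Setting: the associated split graph of `G̃ = Ĉ(P)`,
the bipartite complement of the domination bipartite graph of `P`. -/
def paperH {n : ℕ} (P : Fin n → Fin n → Prop) : SimpleGraph (Fin n ⊕ Fin n) :=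
  assocSplitGraph (fun i j : Fin n => ¬ P i j)

/-- The split graph `H − E₀` of the Setting: `H` with the perfect matching
`E₀ = {uᵢvᵢ}` deleted. -/
def paperHminusE0 {n : ℕ} (P : Fin n → Fin n → Prop) : SimpleGraph (Fin n ⊕ Fin n) :=
  assocSplitGraph (fun i j : Fin n => ¬ P i j ∧ i ≠ j)

/-- `G` has an `AP₅`: an `AC₆` with `vᵢ = vᵢ₊₃` for some `i`, having exactly five
distinct vertices. -/
def HasAP5 {V : Type*} [DecidableEq V] (G : SimpleGraph V) : Prop :=
  ∃ v1 v2 v3 v4 v5 v6 : V,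
    (v1 = v4 ∨ v2 = v5 ∨ v3 = v6) ∧
    ({v1, v2, v3, v4, v5, v6} : Finset V).card = 5 ∧
    IsAC6 G v1 v2 v3 v4 v5 v6

/-- `G` has a double `AP₆`: an `AP₆` (an `AC₆` on six distinct vertices) containing in
addition the edges `v₁v₃, v₂v₆`, or `v₃v₅, v₄v₂`, or `v₅v₁, v₆v₄`. -/
def HasDoubleAP6 {V : Type*} (G : SimpleGraph V) : Prop :=
  ∃ v1 v2 v3 v4 v5 v6 : V,
    List.Pairwise (· ≠ ·) [v1, v2, v3, v4, v5, v6] ∧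
    IsAC6 G v1 v2 v3 v4 v5 v6 ∧
    ((G.Adj v1 v3 ∧ G.Adj v2 v6) ∨ (G.Adj v3 v5 ∧ G.Adj v4 v2) ∨
      (G.Adj v5 v1 ∧ G.Adj v6 v4))

def IsSplitPartition {V : Type*} (G : SimpleGraph V) (K : Set V) : Prop :=
  G.IsClique K ∧ G.IsIndepSet Kᶜ

namespace IsSplitPartition

variable {V : Type*} {G : SimpleGraph V} {K : Set V}

theorem mem_of_adj (hS : IsSplitPartition G K) {u v : V} (hu : u ∉ K) (huv : G.Adj u v) :
    v ∈ K := by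
  by_contra hv
  exact hS.2 hu hv huv.ne huv

theorem notMem_of_not_adj (hS : IsSplitPartition G K) {u v : V} (hu : u ∈ K) (hne : u ≠ v)
    (huv : ¬ G.Adj u v) : v ∉ K :=
  fun hv => huv (hS.1 hu hv hne)

theorem mem_of_adj_of_adj (hS : IsSplitPartition G K) {u v w : V} (hne : u ≠ v)
    (huv : ¬ G.Adj u v) (huw : G.Adj u w) (hvw : G.Adj v w) : w ∈ K := by
  by_cases hu : u ∈ K
  · exact hS.mem_of_adj (hS.notMem_of_not_adj hu hne huv) hvw
  · exact hS.mem_of_adj hu huw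

theorem notMem_of_not_adj_of_adj (hS : IsSplitPartition G K) {a b c : V} (hab : G.Adj a b)
    (hca : ¬ G.Adj c a) (hcb : ¬ G.Adj c b) : c ∉ K := by
  intro hc
  have hca' : c ≠ a := by rintro rfl; exact hcb hab
  have hcb' : c ≠ b := by rintro rfl; exact hca hab.symm
  exact hS.2 (hS.notMem_of_not_adj hc hca' hca) (hS.notMem_of_not_adj hc hcb' hcb) hab.ne hab

theorem not_isAC6_of_eq (hS : IsSplitPartition G K) {c a b x y : V} (hxy : x ≠ y) :
    ¬ IsAC6 G c a b c x y := by
  rintro ⟨hca, hbc, hxy', hab, hcx, hyc⟩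
  have hc : c ∉ K := hS.notMem_of_not_adj_of_adj hab hca fun h => hbc h.symm
  exact hxy' (hS.1 (hS.mem_of_adj hc hcx) (hS.mem_of_adj hc hyc.symm) hxy)

theorem not_isAC6_of_adj_of_adj (hS : IsSplitPartition G K) {v1 v2 v3 v4 v5 v6 : V}
    (h12 : v1 ≠ v2) (h34 : v3 ≠ v4) (h56 : v5 ≠ v6) (h13 : G.Adj v1 v3) (h26 : G.Adj v2 v6) :
    ¬ IsAC6 G v1 v2 v3 v4 v5 v6 := by
  rintro ⟨n12, n34, n56, e23, e45, e61⟩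
  have h3 : v3 ∈ K := hS.mem_of_adj_of_adj h12 n12 h13 e23
  have h6 : v6 ∈ K := hS.mem_of_adj_of_adj h12 n12 e61.symm h26
  exact hS.2 (hS.notMem_of_not_adj h3 h34 n34)
    (hS.notMem_of_not_adj h6 h56.symm fun h => n56 h.symm) e45.ne e45

end IsSplitPartition

theorem IsAC6.rotate {V : Type*} {G : SimpleGraph V} {v1 v2 v3 v4 v5 v6 : V}
    (h : IsAC6 G v1 v2 v3 v4 v5 v6) : IsAC6 G v3 v4 v5 v6 v1 v2 :=
  let ⟨n12, n34, n56, e23, e45, e61⟩ := h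
  ⟨n34, n56, n12, e45, e61, e23⟩

theorem HasAP5.exists_isAC6 {V : Type*} [DecidableEq V] {G : SimpleGraph V} (h : HasAP5 G) :
    ∃ c a b x y : V, x ≠ y ∧ IsAC6 G c a b c x y := by
  obtain ⟨v1, v2, v3, v4, v5, v6, hrep, hcard, hac⟩ := h
  have ne_of_card : ∀ a b c e f : V,
      ({a, b, c, a, e, f} : Finset V) = {v1, v2, v3, v4, v5, v6} → e ≠ f := by
    rintro a b c e f heq rfl
    have hsmall : ({a, b, c, a, e, e} : Finset V) = {a, b, c, e} := by
      ext; simp only [Finset.mem_insert, Finset.mem_singleton]; tauto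
    have := Finset.card_le_four (a := a) (b := b) (c := c) (d := e)
    rw [← hsmall, heq] at this
    omega
  rcases hrep with rfl | rfl | rfl
  · exact ⟨v1, v2, v3, v5, v6, ne_of_card _ _ _ _ _ rfl, hac⟩
  · refine ⟨v2, v6, v1, v3, v4, ne_of_card v2 v6 v1 v3 v4 ?_, hac.rotate.rotate⟩
    ext; simp only [Finset.mem_insert, Finset.mem_singleton]; tauto
  · refine ⟨v3, v4, v5, v1, v2, ne_of_card v3 v4 v5 v1 v2 ?_, hac.rotate⟩
    ext; simp only [Finset.mem_insert, Finset.mem_singleton]; tauto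

theorem HasDoubleAP6.exists_isAC6 {V : Type*} {G : SimpleGraph V} (h : HasDoubleAP6 G) :
    ∃ v1 v2 v3 v4 v5 v6 : V, v1 ≠ v2 ∧ v3 ≠ v4 ∧ v5 ≠ v6 ∧ G.Adj v1 v3 ∧ G.Adj v2 v6 ∧
      IsAC6 G v1 v2 v3 v4 v5 v6 := by
  obtain ⟨v1, v2, v3, v4, v5, v6, hdist, hac, hchord⟩ := h
  simp only [List.pairwise_cons, List.mem_cons, List.not_mem_nil, or_false, List.Pairwise.nil,
    and_true, forall_eq_or_imp, forall_eq] at hdist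
  obtain ⟨⟨h12, -⟩, -, ⟨h34, -⟩, -, h56, -⟩ := hdist
  rcases hchord with ⟨h13, h26⟩ | ⟨h35, h42⟩ | ⟨h51, h64⟩
  · exact ⟨_, _, _, _, _, _, h12, h34, h56, h13, h26, hac⟩
  · exact ⟨_, _, _, _, _, _, h34, h56, h12, h35, h42, hac.rotate⟩
  · exact ⟨_, _, _, _, _, _, h56, h12, h34, h51, h64, hac.rotate.rotate⟩

theorem statement_2_general {V : Type*} [DecidableEq V] (G : SimpleGraph V)
    (hG : IsSplitGraph G) : ¬ HasAP5 G ∧ ¬ HasDoubleAP6 G := by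
  obtain ⟨K, hK, hI⟩ := hG
  have hS : IsSplitPartition G K := ⟨hK, fun u hu v hv _ => hI u hu v hv⟩
  refine ⟨fun h => ?_, fun h => ?_⟩
  · obtain ⟨c, a, b, x, y, hxy, hac⟩ := h.exists_isAC6
    exact hS.not_isAC6_of_eq hxy hac
  · obtain ⟨v1, v2, v3, v4, v5, v6, h12, h34, h56, h13, h26, hac⟩ := h.exists_isAC6
    exact hS.not_isAC6_of_adj_of_adj h12 h34 h56 h13 h26 hac

/-- Lemma: a split graph contains no `AP₅` and no double `AP₆`. -/
theorem statement_2 {V : Type*} [Fintype V] [DecidableEq V] (G : SimpleGraph V)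
    (hG : IsSplitGraph G) : ¬ HasAP5 G ∧ ¬ HasDoubleAP6 G :=
  statement_2_general G hG
end

section
/- In the Setting, assume H* is bipartite and fix a proper 2-coloring χ_0 of the vertices of H*. Let v_1,…,v_6 be an AP_6 of H whose edges v_2v_3, v_4v_5, v_6v_1 carry the literals ℓ_1, ℓ_2, ℓ_3 respectively, where no two of ℓ_1, ℓ_2, ℓ_3 are negations of each other. Then for every edge e of H with ℓ_e = ℓ_2, there exists an AP_6 w_1,…,w_6 in H with {w_1,w_2} = {v_1,v_2} (the non-edge v_1v_2 is its base) and w_4w_5 = e (e is its ceiling), such that ℓ_{w_2w_3} = ℓ_1, ℓ_{w_4w_5} = ℓ_2 and ℓ_{w_6w_1} = ℓ_3. -/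
open SimpleGraph

/-!
In the associated split graph of a bipartite graph `E ⊆ α × β`, only edges between `α` and `β`
take part in conflicts, and two such edges `ba`, `b'a'` conflict iff `a ≠ a'`, `b ≠ b'` and
`ab'`, `a'b` are non-edges. Take an AP₆ `v₁, …, v₆` with `v₁ ∈ α` and two consecutive conflicts
`v₄v₅ ‖ dc ‖ d'c'`. Since no two of the literals `ℓ₁, ℓ₂, ℓ₃` are opposite, the chords `v₂v₅`,
`v₁v₄` and then `v₂c`, `v₁d` are edges (a missing one would produce a path of conflicts of odd
length between two of the `ℓᵢ`), and `v₁, v₂, c, d', c', d` is an AP₆ whose edges carry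
`ℓ₁, ℓ₂, ℓ₃` again. Conflicts flip the colour, so the edge `e`, of the colour of `v₄v₅`, is
reached by repeating this step. An AP₆ with `v₁ ∈ β` is first reversed to `v₂, v₁, v₆, …, v₃`.
-/

open Sum

theorem Relation.ReflTransGen.two_step_invariant {α : Type*} {r : α → α → Prop} {p : α → Prop}
    (hp : ∀ a b c, p a → r a b → r b c → p c) {a b : α} (ha : p a)
    (h : Relation.ReflTransGen r a b) : p b ∨ ∃ c, p c ∧ r c b := by
  induction h with
  | refl => exact .inl ha
  | tail _ hbc ih =>
    obtain hb | ⟨c, hc, hcb⟩ := ih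
    · exact .inr ⟨_, hb, hbc⟩
    · exact .inl (hp _ _ _ hc hcb hbc)

section ConflictGraph

variable {V : Type*} {G : SimpleGraph V} {χ : Sym2 V → Bool}

theorem Sym2Conflict.symm {e f : Sym2 V} (h : Sym2Conflict G e f) : Sym2Conflict G f e := by
  obtain ⟨a, b, c, d, rfl, rfl, hab, hcd, nad, nbc, hac, had, hbc, hbd⟩ := h
  exact ⟨c, d, a, b, rfl, rfl, hcd, hab, fun h ↦ nbc h.symm, fun h ↦ nad h.symm,
    hac.symm, hbc.symm, had.symm, hbd.symm⟩

instance : Std.Symm (Sym2Conflict G) := ⟨fun _ _ ↦ Sym2Conflict.symm⟩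

theorem SameComp.symm {e f : Sym2 V} (h : SameComp G e f) : SameComp G f e :=
  Relation.ReflTransGen.stdSymm.symm _ _ h

theorem SameLit.refl (e : Sym2 V) : SameLit G χ e e := ⟨.refl, rfl⟩

theorem SameLit.symm {e f : Sym2 V} (h : SameLit G χ e f) : SameLit G χ f e :=
  ⟨h.1.symm, h.2.symm⟩

theorem SameLit.trans {e f g : Sym2 V} (h₁ : SameLit G χ e f) (h₂ : SameLit G χ f g) :
    SameLit G χ e g :=
  ⟨h₁.1.trans h₂.1, h₁.2.trans h₂.2⟩

theorem OppLit.symm {e f : Sym2 V} (h : OppLit G χ e f) : OppLit G χ f e :=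
  ⟨h.1.symm, h.2.symm⟩

theorem SameLit.trans_oppLit {e f g : Sym2 V} (h₁ : SameLit G χ e f) (h₂ : OppLit G χ f g) :
    OppLit G χ e g :=
  ⟨h₁.1.trans h₂.1, h₁.2 ▸ h₂.2⟩

theorem OppLit.trans_sameLit {e f g : Sym2 V} (h₁ : OppLit G χ e f) (h₂ : SameLit G χ f g) :
    OppLit G χ e g :=
  (h₂.symm.trans_oppLit h₁.symm).symm

theorem not_oppLit_of_sameLit {e f e' f' : Sym2 V} (h : ¬ OppLit G χ e f)
    (he : SameLit G χ e' e) (hf : SameLit G χ f' f) : ¬ OppLit G χ e' f' :=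
  fun h' ↦ h (he.symm.trans_oppLit (h'.trans_sameLit hf))

namespace ProperConflictColoring

variable (hχ : ProperConflictColoring G χ)
include hχ

theorem oppLit {e f : Sym2 V} (h : Sym2Conflict G e f) : OppLit G χ e f :=
  ⟨.single h, hχ e f h⟩

theorem sameLit {e f g : Sym2 V} (h₁ : Sym2Conflict G e f) (h₂ : Sym2Conflict G f g) :
    SameLit G χ e g :=
  ⟨.tail (.single h₁) h₂,
    (Bool.eq_not_iff.mpr (hχ e f h₁)).trans (Bool.eq_not_iff.mpr (hχ f g h₂).symm).symm⟩

end ProperConflictColoring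

def IsAP6 (G : SimpleGraph V) (v₁ v₂ v₃ v₄ v₅ v₆ : V) : Prop :=
  List.Pairwise (· ≠ ·) [v₁, v₂, v₃, v₄, v₅, v₆] ∧ IsAC6 G v₁ v₂ v₃ v₄ v₅ v₆

variable {v₁ v₂ v₃ v₄ v₅ v₆ : V}

theorem IsAP6.rotate (h : IsAP6 G v₁ v₂ v₃ v₄ v₅ v₆) : IsAP6 G v₃ v₄ v₅ v₆ v₁ v₂ := by
  obtain ⟨hd, n₁₂, n₃₄, n₅₆, a₂₃, a₄₅, a₆₁⟩ := h
  refine ⟨?_, n₃₄, n₅₆, n₁₂, a₄₅, a₆₁, a₂₃⟩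
  simp only [List.pairwise_cons, List.mem_cons, List.not_mem_nil, forall_eq_or_imp] at hd ⊢
  grind

theorem IsAP6.reverse (h : IsAP6 G v₁ v₂ v₃ v₄ v₅ v₆) : IsAP6 G v₂ v₁ v₆ v₅ v₄ v₃ := by
  obtain ⟨hd, n₁₂, n₃₄, n₅₆, a₂₃, a₄₅, a₆₁⟩ := h
  refine ⟨?_, fun h ↦ n₁₂ h.symm, fun h ↦ n₅₆ h.symm, fun h ↦ n₃₄ h.symm, a₆₁.symm, a₄₅.symm,
    a₂₃.symm⟩
  simp only [List.pairwise_cons, List.mem_cons, List.not_mem_nil, forall_eq_or_imp] at hd ⊢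
  grind

theorem IsAP6.adj_of_not_oppLit (hχ : ProperConflictColoring G χ)
    (hv : IsAP6 G v₁ v₂ v₃ v₄ v₅ v₆) (h : ¬ OppLit G χ s(v₂, v₃) s(v₄, v₅)) : G.Adj v₂ v₅ := by
  obtain ⟨hd, -, n₃₄, -, a₂₃, a₄₅, -⟩ := hv
  simp only [List.pairwise_cons, List.mem_cons, List.not_mem_nil, forall_eq_or_imp] at hd
  obtain ⟨-, ⟨-, d₂₄, d₂₅, -⟩, ⟨d₃₄, d₃₅, -⟩, -⟩ := hd
  by_contra n₂₅
  exact h (hχ.oppLit ⟨v₃, v₂, v₅, v₄, Sym2.eq_swap, Sym2.eq_swap, a₂₃.symm, a₄₅.symm, n₃₄, n₂₅,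
    d₃₅, d₃₄, d₂₅, d₂₄⟩)

/-- `f` is the ceiling `w₄w₅` of an AP₆ `v₁, v₂, w₃, w₄, w₅, w₆` whose edges `v₂w₃, w₄w₅, w₆v₁`
carry the literals of `ℓ₁, ℓ₂, ℓ₃`. -/
def IsAP6Ceiling (G : SimpleGraph V) (χ : Sym2 V → Bool) (v₁ v₂ : V) (ℓ₁ ℓ₂ ℓ₃ f : Sym2 V) :
    Prop :=
  ∃ w₃ w₄ w₅ w₆, IsAP6 G v₁ v₂ w₃ w₄ w₅ w₆ ∧ s(w₄, w₅) = f ∧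
    SameLit G χ s(v₂, w₃) ℓ₁ ∧ SameLit G χ s(w₄, w₅) ℓ₂ ∧ SameLit G χ s(w₆, v₁) ℓ₃

theorem IsAP6Ceiling.reverse {ℓ₁ ℓ₂ ℓ₃ f : Sym2 V} (h : IsAP6Ceiling G χ v₂ v₁ ℓ₃ ℓ₂ ℓ₁ f) :
    IsAP6Ceiling G χ v₁ v₂ ℓ₁ ℓ₂ ℓ₃ f := by
  obtain ⟨w₃, w₄, w₅, w₆, hw, rfl, h₃, h₂, h₁⟩ := h
  exact ⟨w₆, w₅, w₄, w₃, hw.reverse, Sym2.eq_swap, Sym2.eq_swap ▸ h₁, Sym2.eq_swap ▸ h₂,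
    Sym2.eq_swap ▸ h₃⟩

/-- Conflicts flip the colour, so `e`, having the colour of `f₀`, is an even number of
conflicts away from `f₀`. -/
theorem isAP6Ceiling_of_sameLit (hχ : ProperConflictColoring G χ) {ℓ₁ ℓ₂ ℓ₃ f₀ e : Sym2 V}
    (hstep : ∀ {f f' f''}, IsAP6Ceiling G χ v₁ v₂ ℓ₁ ℓ₂ ℓ₃ f → Sym2Conflict G f f' →
      Sym2Conflict G f' f'' → IsAP6Ceiling G χ v₁ v₂ ℓ₁ ℓ₂ ℓ₃ f'')
    (h₀ : IsAP6Ceiling G χ v₁ v₂ ℓ₁ ℓ₂ ℓ₃ f₀) (he : SameLit G χ e f₀) :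
    IsAP6Ceiling G χ v₁ v₂ ℓ₁ ℓ₂ ℓ₃ e := by
  have hcolor : ∀ {f}, IsAP6Ceiling G χ v₁ v₂ ℓ₁ ℓ₂ ℓ₃ f → χ f = χ ℓ₂ :=
    fun ⟨_, _, _, _, _, hf, _, h₂, _⟩ ↦ hf ▸ h₂.2
  obtain he' | ⟨f, hf, hfe⟩ := Relation.ReflTransGen.two_step_invariant
    (p := IsAP6Ceiling G χ v₁ v₂ ℓ₁ ℓ₂ ℓ₃) (fun _ _ _ ↦ hstep) h₀ he.1.symm
  · exact he'
  · exact absurd ((hcolor hf).trans (he.2.trans (hcolor h₀)).symm) (hχ f e hfe)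

end ConflictGraph

section AssocSplitGraph

variable {α β : Type*} {E : α → β → Prop} {χ : Sym2 (α ⊕ β) → Bool}

theorem sym2Conflict_assocSplitGraph_iff {a a' : α} {b b' : β} (hab : E a b) (hab' : E a' b') :
    Sym2Conflict (assocSplitGraph E) s(inr b, inl a) s(inr b', inl a') ↔
      a ≠ a' ∧ b ≠ b' ∧ ¬ E a b' ∧ ¬ E a' b := by
  constructor
  · rintro ⟨x, y, z, w, he, hf, -, -, nxw, nyz, dxz, dxw, dyz, dyw⟩
    rw [Sym2.eq_iff] at he hf
    rcases he with ⟨rfl, rfl⟩ | ⟨rfl, rfl⟩ <;> rcases hf with ⟨rfl, rfl⟩ | ⟨rfl, rfl⟩ <;>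
      simp_all [assocSplitGraph]
  · rintro ⟨ha, hb, nab', na'b⟩
    exact ⟨inr b, inl a, inr b', inl a', rfl, rfl, hab, hab', na'b, nab', by simpa using hb,
      inr_ne_inl, inl_ne_inr, by simpa using ha⟩

theorem exists_eq_of_sym2Conflict_assocSplitGraph {f f' : Sym2 (α ⊕ β)}
    (h : Sym2Conflict (assocSplitGraph E) f f') : ∃ a b, E a b ∧ f' = s(inr b, inl a) := by
  obtain ⟨x, y, z, w, -, rfl, hxy, hzw, nxw, nyz, -, dxw, dyz, -⟩ := h
  rcases z with c | d <;> rcases w with c' | d'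
  · exact hzw.elim
  · exact ⟨c, d', hzw, Sym2.eq_swap⟩
  · exact ⟨c', d, hzw, rfl⟩
  · rcases x with _ | _ <;> rcases y with _ | _ <;> simp_all [assocSplitGraph]

theorem isAP6_assocSplitGraph_iff {a₁ a₃ a₅ : α} {b₂ b₄ b₆ : β} :
    IsAP6 (assocSplitGraph E) (inl a₁) (inr b₂) (inl a₃) (inr b₄) (inl a₅) (inr b₆) ↔
      (¬ E a₁ b₂ ∧ ¬ E a₃ b₄ ∧ ¬ E a₅ b₆ ∧ E a₃ b₂ ∧ E a₅ b₄ ∧ E a₁ b₆) ∧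
      (a₁ ≠ a₃ ∧ a₁ ≠ a₅ ∧ a₃ ≠ a₅) ∧ (b₂ ≠ b₄ ∧ b₂ ≠ b₆ ∧ b₄ ≠ b₆) := by
  simp [IsAP6, IsAC6, assocSplitGraph]
  tauto

theorem exists_eq_inr_of_adj_inl {v : α ⊕ β} {a : α} (h : (assocSplitGraph E).Adj v (inl a)) :
    ∃ b, v = inr b := by
  rcases v with _ | b
  · exact h.elim
  · exact ⟨b, rfl⟩

theorem exists_eq_inl_of_not_adj_inr {v : α ⊕ β} {b : β}
    (h : ¬ (assocSplitGraph E).Adj v (inr b)) (hne : v ≠ inr b) : ∃ a, v = inl a := by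
  rcases v with a | b'
  · exact ⟨a, rfl⟩
  · exact absurd (fun hb ↦ hne (congrArg inr hb)) h

theorem IsAP6.exists_eq_of_inl {a₁ : α} {v₂ v₃ v₄ v₅ v₆ : α ⊕ β}
    (hv : IsAP6 (assocSplitGraph E) (inl a₁) v₂ v₃ v₄ v₅ v₆) :
    ∃ b₂ a₃ b₄ a₅ b₆, v₂ = inr b₂ ∧ v₃ = inl a₃ ∧ v₄ = inr b₄ ∧ v₅ = inl a₅ ∧ v₆ = inr b₆ := by
  obtain ⟨hd, -, n₃₄, n₅₆, a₂₃, a₄₅, a₆₁⟩ := hv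
  simp only [List.pairwise_cons, List.mem_cons, List.not_mem_nil, forall_eq_or_imp] at hd
  obtain ⟨-, -, ⟨d₃₄, -⟩, -, ⟨d₅₆, -⟩, -⟩ := hd
  obtain ⟨b₆, rfl⟩ := exists_eq_inr_of_adj_inl a₆₁
  obtain ⟨a₅, rfl⟩ := exists_eq_inl_of_not_adj_inr n₅₆ d₅₆
  obtain ⟨b₄, rfl⟩ := exists_eq_inr_of_adj_inl a₄₅
  obtain ⟨a₃, rfl⟩ := exists_eq_inl_of_not_adj_inr n₃₄ d₃₄
  obtain ⟨b₂, rfl⟩ := exists_eq_inr_of_adj_inl a₂₃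
  exact ⟨b₂, a₃, b₄, a₅, b₆, rfl, rfl, rfl, rfl, rfl⟩

section Ceiling

variable (hχ : ProperConflictColoring (assocSplitGraph E) χ)
  {a₁ a₃ a₅ c c' : α} {b₂ b₄ b₆ d d' : β}
  (hv : IsAP6 (assocSplitGraph E) (inl a₁) (inr b₂) (inl a₃) (inr b₄) (inl a₅) (inr b₆))
  (h₁₂ : ¬ OppLit (assocSplitGraph E) χ s(inr b₂, inl a₃) s(inr b₄, inl a₅))
  (h₂₃ : ¬ OppLit (assocSplitGraph E) χ s(inr b₄, inl a₅) s(inr b₆, inl a₁))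
include hχ hv h₁₂ h₂₃

theorem sym2Conflict_chords :
    Sym2Conflict (assocSplitGraph E) s(inr b₄, inl a₁) s(inr b₂, inl a₃) ∧
      Sym2Conflict (assocSplitGraph E) s(inr b₂, inl a₅) s(inr b₆, inl a₁) := by
  obtain ⟨⟨n₁₂, n₃₄, n₅₆, e₃₂, -, e₁₆⟩, ⟨d₁₃, d₁₅, -⟩, ⟨d₂₄, d₂₆, -⟩⟩ :=
    isAP6_assocSplitGraph_iff.mp hv
  have e₁₄ : E a₁ b₄ := hv.rotate.adj_of_not_oppLit hχ h₂₃
  have e₅₂ : E a₅ b₂ := hv.adj_of_not_oppLit hχ h₁₂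
  exact ⟨(sym2Conflict_assocSplitGraph_iff e₁₄ e₃₂).mpr ⟨d₁₃, d₂₄.symm, n₁₂, n₃₄⟩,
    (sym2Conflict_assocSplitGraph_iff e₅₂ e₁₆).mpr ⟨d₁₅.symm, d₂₆, n₅₆, n₁₂⟩⟩

theorem adj_base_of_sym2Conflict_ceiling (hcd : E c d)
    (hk : Sym2Conflict (assocSplitGraph E) s(inr b₄, inl a₅) s(inr d, inl c)) :
    E c b₂ ∧ E a₁ d := by
  obtain ⟨⟨-, -, -, -, e₅₄, -⟩, -, -⟩ := isAP6_assocSplitGraph_iff.mp hv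
  have e₅₂ : E a₅ b₂ := hv.adj_of_not_oppLit hχ h₁₂
  have e₁₄ : E a₁ b₄ := hv.rotate.adj_of_not_oppLit hχ h₂₃
  obtain ⟨k₁₄, k₅₂⟩ := sym2Conflict_chords hχ hv h₁₂ h₂₃
  obtain ⟨d₅c, d₄d, n₅d, nc₄⟩ := (sym2Conflict_assocSplitGraph_iff e₅₄ hcd).mp hk
  constructor
  · by_contra nc₂
    have k : Sym2Conflict (assocSplitGraph E) s(inr d, inl c) s(inr b₂, inl a₅) :=
      (sym2Conflict_assocSplitGraph_iff hcd e₅₂).mpr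
        ⟨d₅c.symm, fun hd ↦ n₅d (hd ▸ e₅₂), nc₂, n₅d⟩
    exact h₂₃ ((hχ.sameLit hk k).trans_oppLit (hχ.oppLit k₅₂))
  · by_contra n₁d
    have k : Sym2Conflict (assocSplitGraph E) s(inr d, inl c) s(inr b₄, inl a₁) :=
      (sym2Conflict_assocSplitGraph_iff hcd e₁₄).mpr
        ⟨fun hc ↦ nc₄ (hc ▸ e₁₄), d₄d.symm, nc₄, n₁d⟩
    exact h₁₂ ((hχ.sameLit hk k).trans_oppLit (hχ.oppLit k₁₄)).symm

theorem isAP6_of_sym2Conflict_ceiling (hcd : E c d) (hcd' : E c' d')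
    (hk : Sym2Conflict (assocSplitGraph E) s(inr b₄, inl a₅) s(inr d, inl c))
    (hk' : Sym2Conflict (assocSplitGraph E) s(inr d, inl c) s(inr d', inl c')) :
    IsAP6 (assocSplitGraph E) (inl a₁) (inr b₂) (inl c) (inr d') (inl c') (inr d) ∧
      SameLit (assocSplitGraph E) χ s(inr b₂, inl c) s(inr b₂, inl a₃) ∧
      SameLit (assocSplitGraph E) χ s(inr d', inl c') s(inr b₄, inl a₅) ∧
      SameLit (assocSplitGraph E) χ s(inr d, inl a₁) s(inr b₆, inl a₁) := by
  obtain ⟨⟨n₁₂, -, -, -, e₅₄, -⟩, ⟨-, d₁₅, -⟩, ⟨d₂₄, -, -⟩⟩ := isAP6_assocSplitGraph_iff.mp hv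
  have e₅₂ : E a₅ b₂ := hv.adj_of_not_oppLit hχ h₁₂
  have e₁₄ : E a₁ b₄ := hv.rotate.adj_of_not_oppLit hχ h₂₃
  obtain ⟨-, -, n₅d, nc₄⟩ := (sym2Conflict_assocSplitGraph_iff e₅₄ hcd).mp hk
  obtain ⟨dcc', ddd', ncd', nc'd⟩ := (sym2Conflict_assocSplitGraph_iff hcd hcd').mp hk'
  obtain ⟨ec₂, e₁d⟩ := adj_base_of_sym2Conflict_ceiling hχ hv h₁₂ h₂₃ hcd hk
  have dd₂ : d ≠ b₂ := fun hd ↦ n₅d (hd ▸ e₅₂)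
  obtain ⟨k₁₄, k₅₂⟩ := sym2Conflict_chords hχ hv h₁₂ h₂₃
  refine ⟨isAP6_assocSplitGraph_iff.mpr ⟨⟨n₁₂, ncd', nc'd, ec₂, hcd', e₁d⟩,
      ⟨fun hc ↦ nc₄ (hc ▸ e₁₄), fun hc ↦ nc'd (hc ▸ e₁d), dcc'⟩,
      ⟨fun hd ↦ ncd' (hd ▸ ec₂), dd₂.symm, ddd'.symm⟩⟩, ?_, hχ.sameLit hk'.symm hk.symm, ?_⟩
  · refine hχ.sameLit ((sym2Conflict_assocSplitGraph_iff ec₂ e₁₄).mpr ?_) k₁₄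
    exact ⟨fun hc ↦ nc₄ (hc ▸ e₁₄), d₂₄, nc₄, n₁₂⟩
  · refine hχ.sameLit ((sym2Conflict_assocSplitGraph_iff e₁d e₅₂).mpr ?_) k₅₂
    exact ⟨d₁₅, dd₂, n₁₂, n₅d⟩

end Ceiling

theorem isAP6Ceiling_of_sym2Conflict_sym2Conflict
    (hχ : ProperConflictColoring (assocSplitGraph E) χ) {a₁ : α} {v₂ : α ⊕ β}
    {ℓ₁ ℓ₂ ℓ₃ f f' f'' : Sym2 (α ⊕ β)}
    (h₁₂ : ¬ OppLit (assocSplitGraph E) χ ℓ₁ ℓ₂) (h₂₃ : ¬ OppLit (assocSplitGraph E) χ ℓ₂ ℓ₃)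
    (hf : IsAP6Ceiling (assocSplitGraph E) χ (inl a₁) v₂ ℓ₁ ℓ₂ ℓ₃ f)
    (hk : Sym2Conflict (assocSplitGraph E) f f') (hk' : Sym2Conflict (assocSplitGraph E) f' f'') :
    IsAP6Ceiling (assocSplitGraph E) χ (inl a₁) v₂ ℓ₁ ℓ₂ ℓ₃ f'' := by
  obtain ⟨w₃, w₄, w₅, w₆, hw, rfl, s₁, s₂, s₃⟩ := hf
  obtain ⟨b₂, a₃, b₄, a₅, b₆, rfl, rfl, rfl, rfl, rfl⟩ := hw.exists_eq_of_inl
  obtain ⟨c, d, hcd, rfl⟩ := exists_eq_of_sym2Conflict_assocSplitGraph hk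
  obtain ⟨c', d', hcd', rfl⟩ := exists_eq_of_sym2Conflict_assocSplitGraph hk'
  obtain ⟨hw', t₁, t₂, t₃⟩ := isAP6_of_sym2Conflict_ceiling hχ hw
    (not_oppLit_of_sameLit h₁₂ s₁ s₂) (not_oppLit_of_sameLit h₂₃ s₂ s₃) hcd hcd' hk hk'
  exact ⟨_, _, _, _, hw', rfl, t₁.trans s₁, t₂.trans s₂, t₃.trans s₃⟩

theorem IsAP6.isAP6Ceiling_of_sameLit_of_inl
    (hχ : ProperConflictColoring (assocSplitGraph E) χ) {a₁ : α} {v₂ v₃ v₄ v₅ v₆ : α ⊕ β}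
    (hv : IsAP6 (assocSplitGraph E) (inl a₁) v₂ v₃ v₄ v₅ v₆)
    (h₁₂ : ¬ OppLit (assocSplitGraph E) χ s(v₂, v₃) s(v₄, v₅))
    (h₂₃ : ¬ OppLit (assocSplitGraph E) χ s(v₄, v₅) s(v₆, inl a₁)) {e : Sym2 (α ⊕ β)}
    (he : SameLit (assocSplitGraph E) χ e s(v₄, v₅)) :
    IsAP6Ceiling (assocSplitGraph E) χ (inl a₁) v₂ s(v₂, v₃) s(v₄, v₅) s(v₆, inl a₁) e :=
  isAP6Ceiling_of_sameLit hχ (isAP6Ceiling_of_sym2Conflict_sym2Conflict hχ h₁₂ h₂₃)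
    ⟨v₃, v₄, v₅, v₆, hv, rfl, .refl _, .refl _, .refl _⟩ he

theorem IsAP6.isAP6Ceiling_of_sameLit
    (hχ : ProperConflictColoring (assocSplitGraph E) χ) {v₁ v₂ v₃ v₄ v₅ v₆ : α ⊕ β}
    (hv : IsAP6 (assocSplitGraph E) v₁ v₂ v₃ v₄ v₅ v₆)
    (h₁₂ : ¬ OppLit (assocSplitGraph E) χ s(v₂, v₃) s(v₄, v₅))
    (h₂₃ : ¬ OppLit (assocSplitGraph E) χ s(v₄, v₅) s(v₆, v₁)) {e : Sym2 (α ⊕ β)}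
    (he : SameLit (assocSplitGraph E) χ e s(v₄, v₅)) :
    IsAP6Ceiling (assocSplitGraph E) χ v₁ v₂ s(v₂, v₃) s(v₄, v₅) s(v₆, v₁) e := by
  rcases v₁ with a₁ | b₁
  · exact hv.isAP6Ceiling_of_sameLit_of_inl hχ h₁₂ h₂₃ he
  · have n₁₂ := hv.2.1
    have d₁₂ := List.rel_of_pairwise_cons hv.1 List.mem_cons_self
    obtain ⟨a₂, rfl⟩ := exists_eq_inl_of_not_adj_inr (fun h ↦ n₁₂ h.symm) (Ne.symm d₁₂)
    rw [Sym2.eq_swap (a := inl a₂)] at h₁₂ ⊢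
    rw [Sym2.eq_swap (a := v₄)] at h₁₂ h₂₃ he ⊢
    rw [Sym2.eq_swap (a := v₆)] at h₂₃ ⊢
    exact (hv.reverse.isAP6Ceiling_of_sameLit_of_inl hχ (mt OppLit.symm h₂₃) (mt OppLit.symm h₁₂)
      he).reverse

end AssocSplitGraph

theorem statement_11_general {n : ℕ} (P : Fin n → Fin n → Prop)
    (χ : Sym2 (Fin n ⊕ Fin n) → Bool) (hχ : ProperConflictColoring (paperH P) χ)
    (v1 v2 v3 v4 v5 v6 : Fin n ⊕ Fin n)
    (hdist : List.Pairwise (· ≠ ·) [v1, v2, v3, v4, v5, v6])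
    (hAP6 : IsAC6 (paperH P) v1 v2 v3 v4 v5 v6)
    (h12 : ¬ OppLit (paperH P) χ s(v2, v3) s(v4, v5))
    (h23 : ¬ OppLit (paperH P) χ s(v4, v5) s(v6, v1))
    (e : Sym2 (Fin n ⊕ Fin n))
    (hle : SameLit (paperH P) χ e s(v4, v5)) :
    ∃ w1 w2 w3 w4 w5 w6 : Fin n ⊕ Fin n,
      List.Pairwise (· ≠ ·) [w1, w2, w3, w4, w5, w6] ∧
      IsAC6 (paperH P) w1 w2 w3 w4 w5 w6 ∧
      s(w1, w2) = s(v1, v2) ∧ s(w4, w5) = e ∧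
      SameLit (paperH P) χ s(w2, w3) s(v2, v3) ∧
      SameLit (paperH P) χ s(w4, w5) s(v4, v5) ∧
      SameLit (paperH P) χ s(w6, w1) s(v6, v1) := by
  obtain ⟨w3, w4, w5, w6, ⟨hdist', hw⟩, rfl, s₁, s₂, s₃⟩ :=
    IsAP6.isAP6Ceiling_of_sameLit hχ ⟨hdist, hAP6⟩ h12 h23 hle
  exact ⟨v1, v2, w3, w4, w5, w6, hdist', hw, rfl, rfl, s₁, s₂, s₃⟩

/-- Lemma: extension of an `AP₆` with the same base and a prescribed
ceiling carrying the same literals. -/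
theorem statement_11 {n : ℕ} (P : Fin n → Fin n → Prop) (hP : IsPartialOrderRel P)
    (χ : Sym2 (Fin n ⊕ Fin n) → Bool) (hχ : ProperConflictColoring (paperH P) χ)
    (v1 v2 v3 v4 v5 v6 : Fin n ⊕ Fin n)
    (hdist : List.Pairwise (· ≠ ·) [v1, v2, v3, v4, v5, v6])
    (hAP6 : IsAC6 (paperH P) v1 v2 v3 v4 v5 v6)
    (h12 : ¬ OppLit (paperH P) χ s(v2, v3) s(v4, v5))
    (h13 : ¬ OppLit (paperH P) χ s(v2, v3) s(v6, v1))
    (h23 : ¬ OppLit (paperH P) χ s(v4, v5) s(v6, v1))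
    (e : Sym2 (Fin n ⊕ Fin n)) (he : e ∈ (paperH P).edgeSet)
    (hle : SameLit (paperH P) χ e s(v4, v5)) :
    ∃ w1 w2 w3 w4 w5 w6 : Fin n ⊕ Fin n,
      List.Pairwise (· ≠ ·) [w1, w2, w3, w4, w5, w6] ∧
      IsAC6 (paperH P) w1 w2 w3 w4 w5 w6 ∧
      s(w1, w2) = s(v1, v2) ∧ s(w4, w5) = e ∧
      SameLit (paperH P) χ s(w2, w3) s(v2, v3) ∧
      SameLit (paperH P) χ s(w4, w5) s(v4, v5) ∧
      SameLit (paperH P) χ s(w6, w1) s(v6, v1) :=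
  statement_11_general P χ hχ v1 v2 v3 v4 v5 v6 hdist hAP6 h12 h23 e hle
end
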